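/- Let O ⊂ A be an extension of Dedekind domains with A the integral closure of O in a finite separable extension K of the fraction field F of O. Define D_{A/O} = {x ∈ A⊗_O A : (a⊗1)x = (1⊗a)x for all a ∈ A}. Then the multiplication map m : A⊗_O A → A restricts to an isomorphism of A-modules D_{A/O} ≅ d_{A/O}, where d_{A/O} is the relative different ideal. -/

import Mathlib

/-!
The trace pairing identifies `K ⊗[F] K` with `End_F K` through `u ⊗ v ↦ (w ↦ tr(u w) v)`, and
an element `x` with `(a ⊗ 1) x = (1 ⊗ a) x` for all `a` becomes multiplication by some element;
comparing traces shows that this element is `m x`. As `A` is flat over `O`, `A ⊗[O] A` embeds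
into `K ⊗[F] K`, so `m` is injective on `D_{A/O}`. For `x ∈ D_{A/O}` and `y` in the trace dual
`A^∨`, `m(x) y` is the image of `y` under the endomorphism attached to `x`, which visibly lies in
`A`; hence `m(x) ∈ (A^∨)⁻¹ = d_{A/O}`. Conversely, `A` is finite projective over `O`, so it has a
dual family `(a_j, f_j)`, and `f_j = tr(c_j ·)` with `c_j ∈ A^∨`. For `b ∈ d_{A/O}` the element
`∑ b c_j ⊗ a_j` lies in `A ⊗[O] A` and corresponds to multiplication by `b`, so it lies in
`D_{A/O}` and maps to `b`.
-/

open TensorProduct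

/-- The `A`-submodule `D_{A/O} = {x ∈ A ⊗[O] A | ∀ a, (a ⊗ 1)·x = (1 ⊗ a)·x}` of `A ⊗[O] A`
(where `A` acts through the left tensor factor). -/
def Dsub (O A : Type*) [CommRing O] [CommRing A] [Algebra O A] :
    Submodule A (A ⊗[O] A) where
  carrier := {x | ∀ a : A, a • x = ((1 : A) ⊗ₜ[O] a) * x}
  add_mem' := fun hx hy a => by rw [smul_add, hx a, hy a, mul_add]
  zero_mem' := fun a => by rw [smul_zero, mul_zero]
  smul_mem' := fun c x hx => fun a => by rw [smul_comm, hx a, mul_smul_comm]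

theorem Module.Finite.exists_fin_sum_dual_smul_eq (R M : Type*) [CommSemiring R] [AddCommMonoid M]
    [Module R M] [Module.Finite R M] [Module.Projective R M] :
    ∃ (n : ℕ) (a : Fin n → M) (f : Fin n → Module.Dual R M), ∀ x, ∑ j, f j x • a j = x := by
  obtain ⟨n, π, σ, -, -, hπσ⟩ := Module.Finite.exists_comp_eq_id_of_projective R M
  refine ⟨n, fun j => π (Pi.single j 1), fun j => LinearMap.proj j ∘ₗ σ, fun x => ?_⟩
  conv_rhs => rw [← LinearMap.id_apply (R := R) x, ← hπσ, LinearMap.comp_apply,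
    ← (Pi.basisFun R (Fin n)).sum_repr (σ x)]
  simp [map_sum, map_smul]

section TraceTensorEnd

variable (R S : Type*) [CommRing R] [CommRing S] [Algebra R S]

noncomputable def traceTensorEnd : S ⊗[R] S →ₗ[R] Module.End R S :=
  dualTensorHom R S S ∘ₗ TensorProduct.map (Algebra.traceForm R S) LinearMap.id

variable {R S}

@[simp]
theorem traceTensorEnd_tmul_apply (u v w : S) :
    traceTensorEnd R S (u ⊗ₜ v) w = Algebra.trace R S (u * w) • v := by
  simp [traceTensorEnd]

theorem traceTensorEnd_smul_apply (u : S) (x : S ⊗[R] S) (w : S) :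
    traceTensorEnd R S (u • x) w = traceTensorEnd R S x (u * w) := by
  induction x using TensorProduct.induction_on with
  | zero => simp
  | tmul p q => simp [smul_tmul', mul_assoc, mul_left_comm u]
  | add x y hx hy => simp only [smul_add, map_add, LinearMap.add_apply, hx, hy]

theorem traceTensorEnd_one_tmul_mul_apply (u : S) (x : S ⊗[R] S) (w : S) :
    traceTensorEnd R S ((1 ⊗ₜ u) * x) w = u * traceTensorEnd R S x w := by
  induction x using TensorProduct.induction_on with
  | zero => simp
  | tmul p q => simp
  | add x y hx hy => simp only [mul_add, map_add, LinearMap.add_apply, hx, hy]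

theorem trace_traceTensorEnd [Module.Free R S] [Module.Finite R S] (x : S ⊗[R] S) :
    LinearMap.trace R S (traceTensorEnd R S x) = Algebra.trace R S (LinearMap.mul' R S x) := by
  induction x using TensorProduct.induction_on with
  | zero => simp
  | tmul u v =>
    rw [traceTensorEnd, LinearMap.comp_apply, ← LinearMap.comp_apply (LinearMap.trace R S),
      LinearMap.trace_eq_contract]
    simp
  | add x y hx hy => simp only [map_add, hx, hy]

end TraceTensorEnd

section Field

variable {F K : Type*} [Field F] [Field K] [Algebra F K] [FiniteDimensional F K]
  [Algebra.IsSeparable F K]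

theorem traceTensorEnd_injective : Function.Injective (traceTensorEnd F K) := by
  have hτ : Function.Injective (Algebra.traceForm F K) :=
    LinearMap.ker_eq_bot.mp (traceForm_nondegenerate F K).ker_eq_bot
  exact (dualTensorHom_bijective (R := F)).1.comp
    (TensorProduct.map_injective_of_flat_flat _ _ hτ Function.injective_id)

theorem traceTensorEnd_eq_lmul_of_mem_Dsub {x : K ⊗[F] K} (hx : x ∈ Dsub F K) :
    traceTensorEnd F K x = Algebra.lmul F K (LinearMap.mul' F K x) := by
  set s := traceTensorEnd F K x 1
  have hs : traceTensorEnd F K x = Algebra.lmul F K s := by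
    ext w
    have := traceTensorEnd_smul_apply w x 1
    rw [hx w, traceTensorEnd_one_tmul_mul_apply, mul_one] at this
    rw [← this, Algebra.coe_lmul_eq_mul, LinearMap.mul_apply', mul_comm]
  suffices s = LinearMap.mul' F K x by rw [hs, this]
  -- Comparing traces of `(1 ⊗ w) * x`, which acts as multiplication by `w * s`.
  have htr (w : K) : Algebra.trace F K (w * s) = Algebra.trace F K (w * LinearMap.mul' F K x) := by
    have hw : traceTensorEnd F K ((1 ⊗ₜ w) * x) = Algebra.lmul F K (w * s) := by
      ext v
      rw [traceTensorEnd_one_tmul_mul_apply, hs]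
      simp [mul_assoc]
    calc Algebra.trace F K (w * s)
        = LinearMap.trace F K (traceTensorEnd F K ((1 ⊗ₜ w) * x)) := by
          rw [hw, Algebra.trace_apply]
      _ = Algebra.trace F K (w * LinearMap.mul' F K x) := by
          rw [trace_traceTensorEnd, ← Algebra.TensorProduct.lmul'_toLinearMap]
          simp
  refine sub_eq_zero.mp ((traceForm_nondegenerate F K).1 _ fun w => ?_)
  rw [Algebra.traceForm_apply, sub_mul, map_sub, mul_comm, htr, mul_comm, sub_self]

theorem traceTensorEnd_eq_lmul_iff {x : K ⊗[F] K} {t : K} :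
    traceTensorEnd F K x = Algebra.lmul F K t ↔ x ∈ Dsub F K ∧ LinearMap.mul' F K x = t := by
  constructor
  · intro h
    have hx : x ∈ Dsub F K := fun u => traceTensorEnd_injective <| LinearMap.ext fun w => by
      rw [traceTensorEnd_smul_apply, traceTensorEnd_one_tmul_mul_apply, h]
      simp only [Algebra.coe_lmul_eq_mul, LinearMap.mul_apply']
      ring
    refine ⟨hx, ?_⟩
    have := LinearMap.congr_fun ((traceTensorEnd_eq_lmul_of_mem_Dsub hx).symm.trans h) 1
    simpa using this
  · rintro ⟨hx, rfl⟩
    exact traceTensorEnd_eq_lmul_of_mem_Dsub hx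

end Field

section FractionRing

open scoped nonZeroDivisors

variable (O A F K : Type*) [CommRing O] [CommRing A] [Algebra O A] [Field F] [Field K]
  [Algebra O F] [IsFractionRing O F] [Algebra A K] [Algebra F K] [Algebra O K]
  [IsScalarTower O F K] [IsScalarTower O A K]

noncomputable def tensorMapFractionRing : A ⊗[O] A →ₐ[O] K ⊗[F] K :=
  ((IsLocalization.algebraTensorEquiv O⁰ F K K).symm.toAlgHom.restrictScalars O).comp
    (Algebra.TensorProduct.map (IsScalarTower.toAlgHom O A K) (IsScalarTower.toAlgHom O A K))

theorem isBaseChange_toAlgHom [IsLocalization (Algebra.algebraMapSubmonoid A O⁰) K] :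
    IsBaseChange F (IsScalarTower.toAlgHom O A K).toLinearMap := by
  have : IsLocalizedModule O⁰ (IsScalarTower.toAlgHom O A K).toLinearMap :=
    isLocalizedModule_iff_isLocalization.mpr ‹_›
  exact IsLocalizedModule.isBaseChange O⁰ F _

variable {O A F K}

@[simp]
theorem tensorMapFractionRing_tmul (p q : A) :
    tensorMapFractionRing O A F K (p ⊗ₜ q) = algebraMap A K p ⊗ₜ algebraMap A K q :=
  rfl

theorem tensorMapFractionRing_injective [IsFractionRing A K] [Module.Flat O A] :
    Function.Injective (tensorMapFractionRing O A F K) := by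
  have : Module.Flat O F := IsLocalization.flat F O⁰
  have : Module.Flat O K := Module.Flat.trans O F K
  have hK : Function.Injective (IsScalarTower.toAlgHom O A K).toLinearMap :=
    IsFractionRing.injective A K
  exact (IsLocalization.algebraTensorEquiv O⁰ F K K).symm.injective.comp
    (TensorProduct.map_injective_of_flat_flat _ _ hK hK)

theorem mul'_tensorMapFractionRing (z : A ⊗[O] A) :
    LinearMap.mul' F K (tensorMapFractionRing O A F K z) =
      algebraMap A K (LinearMap.mul' O A z) := by
  induction z using TensorProduct.induction_on with
  | zero => simp
  | tmul p q => simp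
  | add x y hx hy => simp only [map_add, hx, hy]

theorem tensorMapFractionRing_mem_Dsub_iff [IsFractionRing A K] [Module.Flat O A]
    [IsLocalization (Algebra.algebraMapSubmonoid A O⁰) K] {z : A ⊗[O] A} :
    tensorMapFractionRing O A F K z ∈ Dsub F K ↔ z ∈ Dsub O A := by
  set Θ := tensorMapFractionRing O A F K
  have hsmul : ∀ a : A, Θ (a • z) = algebraMap A K a • Θ z := by
    intro a
    rw [Algebra.smul_def, Algebra.smul_def, map_mul]
    simp [Θ, Algebra.TensorProduct.algebraMap_apply]
  have hmul : ∀ a : A, Θ ((1 ⊗ₜ a) * z) = (1 ⊗ₜ algebraMap A K a) * Θ z := by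
    intro a
    rw [map_mul, tensorMapFractionRing_tmul, map_one]
  constructor
  · exact fun h a => tensorMapFractionRing_injective (by rw [hsmul, hmul, h])
  · intro h
    -- Both sides are `F`-linear in `u`, and agree on the image of `A`.
    have := (isBaseChange_toAlgHom O A F K).algHom_ext
      (LinearMap.mulRight F (Θ z) ∘ₗ Algebra.TensorProduct.includeLeft.toLinearMap)
      (LinearMap.mulRight F (Θ z) ∘ₗ Algebra.TensorProduct.includeRight.toLinearMap)
      fun a => by
        have := congrArg Θ (h a)
        rw [hsmul, hmul] at this
        simpa [Algebra.smul_def, Algebra.TensorProduct.algebraMap_apply] using this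
    intro u
    simpa [Algebra.smul_def, Algebra.TensorProduct.algebraMap_apply] using
      LinearMap.congr_fun this u

theorem traceTensorEnd_tensorMapFractionRing_apply_mem_one (z : A ⊗[O] A) {y : K}
    (hy : y ∈ Submodule.traceDual O F (1 : Submodule A K)) :
    traceTensorEnd F K (tensorMapFractionRing O A F K z) y ∈ (1 : Submodule A K) := by
  induction z using TensorProduct.induction_on with
  | zero => simp
  | tmul p q =>
    obtain ⟨r, hr⟩ := Submodule.mem_traceDual.mp hy _ (Submodule.algebraMap_mem p)
    rw [tensorMapFractionRing_tmul, traceTensorEnd_tmul_apply, mul_comm, ← Algebra.traceForm_apply,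
      ← hr, algebraMap_smul]
    exact Submodule.smul_of_tower_mem _ r (Submodule.algebraMap_mem q)
  | add x₁ x₂ h₁ h₂ => rw [map_add, map_add, LinearMap.add_apply]; exact add_mem h₁ h₂

end FractionRing

section Different

open scoped nonZeroDivisors

variable {O A F K : Type*} [CommRing O] [CommRing A] [Algebra O A] [Field F] [Field K]
  [Algebra O F] [IsFractionRing O F] [Algebra A K] [Algebra F K] [Algebra O K]
  [IsScalarTower O F K] [IsScalarTower O A K] [FiniteDimensional F K] [Algebra.IsSeparable F K]
  [IsLocalization (Algebra.algebraMapSubmonoid A O⁰) K]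

variable (F K) in
theorem Module.Dual.exists_trace_mul_algebraMap_eq (f : Module.Dual O A) :
    ∃ c : K, ∀ x : A, Algebra.trace F K (c * algebraMap A K x) = algebraMap O F (f x) := by
  let φ : Module.Dual F K :=
    (isBaseChange_toAlgHom O A F K).lift (Q := F) (Algebra.linearMap O F ∘ₗ f)
  refine ⟨((Algebra.traceForm F K).toDual (traceForm_nondegenerate F K)).symm φ, fun x => ?_⟩
  rw [← Algebra.traceForm_apply, LinearMap.BilinForm.apply_toDual_symm_apply]
  exact (isBaseChange_toAlgHom O A F K).lift_eq (Algebra.linearMap O F ∘ₗ f) x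

variable (O A F K) in
theorem exists_traceDual_sum_trace_mul_smul_eq [Module.Finite O A] [Module.Projective O A] :
    ∃ (n : ℕ) (a : Fin n → A) (c : Fin n → K),
      (∀ j, c j ∈ Submodule.traceDual O F (1 : Submodule A K)) ∧
      ∀ w, ∑ j, Algebra.trace F K (c j * w) • algebraMap A K (a j) = w := by
  obtain ⟨n, a, f, hf⟩ := Module.Finite.exists_fin_sum_dual_smul_eq O A
  choose c hc using fun j => (f j).exists_trace_mul_algebraMap_eq F K
  refine ⟨n, a, c, fun j => ?_, fun w => ?_⟩
  · rw [Submodule.mem_traceDual]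
    rintro _ ⟨x, rfl⟩
    exact ⟨f j x, by simp [Algebra.smul_def, hc]⟩
  · have := (isBaseChange_toAlgHom O A F K).algHom_ext
      (∑ j, (Algebra.traceForm F K (c j)).smulRight (algebraMap A K (a j))) LinearMap.id
      fun x => by
        simp only [LinearMap.sum_apply, LinearMap.smulRight_apply, Algebra.traceForm_apply,
          AlgHom.toLinearMap_apply, IsScalarTower.coe_toAlgHom', LinearMap.id_coe, id_eq, hc,
          algebraMap_smul]
        conv_rhs => rw [← hf x, map_sum]
        refine Finset.sum_congr rfl fun j _ => ?_
        rw [Algebra.smul_def, Algebra.smul_def, map_mul, ← IsScalarTower.algebraMap_apply]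
    simpa using LinearMap.congr_fun this w

variable [IsFractionRing A K] [Module.Flat O A]

theorem traceTensorEnd_tensorMapFractionRing_eq_lmul_iff {z : A ⊗[O] A} {b : A} :
    traceTensorEnd F K (tensorMapFractionRing O A F K z) = Algebra.lmul F K (algebraMap A K b) ↔
      z ∈ Dsub O A ∧ LinearMap.mul' O A z = b := by
  rw [traceTensorEnd_eq_lmul_iff, tensorMapFractionRing_mem_Dsub_iff, mul'_tensorMapFractionRing,
    (IsFractionRing.injective A K).eq_iff]

theorem algebraMap_mul'_mem_one_div_traceDual {z : A ⊗[O] A} (hz : z ∈ Dsub O A) :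
    algebraMap A K (LinearMap.mul' O A z) ∈ 1 / Submodule.traceDual O F (1 : Submodule A K) := by
  refine Submodule.mem_div_iff_forall_mul_mem.mpr fun y hy => ?_
  have := traceTensorEnd_tensorMapFractionRing_apply_mem_one z hy
  rwa [traceTensorEnd_tensorMapFractionRing_eq_lmul_iff.mpr ⟨hz, rfl⟩] at this

theorem exists_mem_Dsub_mul'_eq [Module.Finite O A] [Module.Projective O A] {b : A}
    (hb : algebraMap A K b ∈ 1 / Submodule.traceDual O F (1 : Submodule A K)) :
    ∃ z ∈ Dsub O A, LinearMap.mul' O A z = b := by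
  obtain ⟨n, a, c, hc, hrepr⟩ := exists_traceDual_sum_trace_mul_smul_eq O A F K
  choose β hβ using fun j =>
    Submodule.mem_one.mp (Submodule.mem_div_iff_forall_mul_mem.mp hb _ (hc j))
  refine ⟨∑ j, β j ⊗ₜ a j,
    (traceTensorEnd_tensorMapFractionRing_eq_lmul_iff (F := F) (K := K)).mp ?_⟩
  ext w
  simp only [map_sum, LinearMap.sum_apply, tensorMapFractionRing_tmul, traceTensorEnd_tmul_apply,
    hβ, mul_assoc, Algebra.coe_lmul_eq_mul, LinearMap.mul_apply', mul_left_comm _ (c _)]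
  exact hrepr _

end Different

theorem mem_differentIdeal_iff_algebraMap_mem {O A : Type*} (F K : Type*) [CommRing O]
    [Field F] [CommRing A] [Field K] [Algebra O F] [Algebra A K] [Algebra O A] [Algebra F K]
    [Algebra O K] [IsScalarTower O F K] [IsScalarTower O A K] [IsDomain O] [IsFractionRing O F]
    [FiniteDimensional F K] [Algebra.IsSeparable F K] [IsIntegralClosure A O K]
    [IsIntegrallyClosed O] [IsDedekindDomain A] [Module.IsTorsionFree O A] [IsFractionRing A K]
    {b : A} :
    b ∈ differentIdeal O A ↔
      algebraMap A K b ∈ 1 / Submodule.traceDual O F (1 : Submodule A K) := by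
  rw [← coeSubmodule_differentIdeal O F A, IsLocalization.mem_coeSubmodule]
  simp [(IsFractionRing.injective A K).eq_iff]

theorem stmt3 (O A F K : Type*)
    [CommRing O] [IsDedekindDomain O]
    [CommRing A] [IsDedekindDomain A]
    [Algebra O A] [NoZeroSMulDivisors O A]
    [Field F] [Field K]
    [Algebra O F] [IsFractionRing O F]
    [Algebra A K] [IsFractionRing A K]
    [Algebra F K] [Algebra O K]
    [IsScalarTower O F K] [IsScalarTower O A K]
    [FiniteDimensional F K] [Algebra.IsSeparable F K]
    [IsIntegralClosure A O K] :
    ∃ e : (Dsub O A) ≃ₗ[A] (differentIdeal O A),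
      ∀ x : Dsub O A, (e x : A) = LinearMap.mul' O A x.1 := by
  have : Module.Finite O A := IsIntegralClosure.finite O F K A
  have : Module.FinitePresentation O A := Module.finitePresentation_of_finite O A
  have : Module.Projective O A := Module.Flat.projective_of_finitePresentation
  have : IsLocalization (Algebra.algebraMapSubmonoid A (nonZeroDivisors O)) K :=
    IsIntegralClosure.isLocalization O F K A
  let T : Dsub O A →ₗ[A] differentIdeal O A :=
    LinearMap.codRestrict _ ((Algebra.TensorProduct.lmul'' O).toLinearMap ∘ₗ (Dsub O A).subtype)
      fun z => (mem_differentIdeal_iff_algebraMap_mem F K).mpr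
        (algebraMap_mul'_mem_one_div_traceDual z.2)
  refine ⟨.ofBijective T ⟨fun z w h => Subtype.ext ?_, fun b => ?_⟩, fun _ => rfl⟩
  · apply tensorMapFractionRing_injective (F := F) (K := K)
    apply traceTensorEnd_injective
    rw [traceTensorEnd_tensorMapFractionRing_eq_lmul_iff.mpr ⟨z.2, rfl⟩,
      traceTensorEnd_tensorMapFractionRing_eq_lmul_iff.mpr ⟨w.2, congrArg Subtype.val h.symm⟩]
    rfl
  · obtain ⟨z, hz, hzb⟩ :=
      exists_mem_Dsub_mul'_eq ((mem_differentIdeal_iff_algebraMap_mem F K).mp b.2)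
    exact ⟨⟨z, hz⟩, Subtype.ext hzb⟩
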